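/- arXiv:2305.09995 — 4 statements merged into one kernel-verified Lean document; each statement's English description precedes it below -/
import Mathlib

section
/- Let P and Q be two probability distributions on the same finite space Ω with Q absolutely continuous with respect to P, and let A ⊆ Ω be any event. Then d_TV(P,Q) ≤ 2(P(A)+Q(A)) + (1−Q(A))·d_TV(P|_{A^c}, Q|_{A^c}), where P|_{A^c} and Q|_{A^c} denote the conditional distributions given the complement of A. -/
open Finset

/-- Total variation distance between two p.m.f.s on a finite space. -/
noncomputable def tvDist {Ω : Type*} [Fintype Ω] (P Q : Ω → ℝ) : ℝ :=
  (∑ x, |P x - Q x|) / 2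

/-- The conditional distribution of `P` given the event `E`. -/
noncomputable def condDist {Ω : Type*} [Fintype Ω] [DecidableEq Ω]
    (P : Ω → ℝ) (E : Finset Ω) : Ω → ℝ :=
  fun x => if x ∈ E then P x / ∑ y ∈ E, P y else 0

/-! Split `2 d_TV(P,Q) = ∑_A |P - Q| + ∑_{Aᶜ} |P - Q|`. The first sum is at most `P(A) + Q(A)`.
On `Aᶜ` write `P = p·P|_{Aᶜ}` and `Q = q·Q|_{Aᶜ}` with `p = P(Aᶜ)`, `q = Q(Aᶜ)`; then
`|p u - q v| ≤ |p - q| u + q |u - v|` summed over `Aᶜ` gives at most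
`|p - q| + 2 q d_TV(P|_{Aᶜ}, Q|_{Aᶜ})`, and `|p - q| = |Q(A) - P(A)| ≤ P(A) + Q(A)`. -/

lemma abs_mul_sub_mul_le (a b u v : ℝ) (hu : 0 ≤ u) (hb : 0 ≤ b) :
    |a * u - b * v| ≤ |a - b| * u + b * |u - v| :=
  calc |a * u - b * v| = |(a - b) * u + b * (u - v)| := by ring_nf
    _ ≤ |(a - b) * u| + |b * (u - v)| := abs_add_le _ _
    _ = |a - b| * u + b * |u - v| := by rw [abs_mul, abs_mul, abs_of_nonneg hu, abs_of_nonneg hb]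

lemma sum_abs_sub_le_sum_add_sum {ι : Type*} (s : Finset ι) (f g : ι → ℝ)
    (hf : ∀ x, 0 ≤ f x) (hg : ∀ x, 0 ≤ g x) :
    ∑ x ∈ s, |f x - g x| ≤ ∑ x ∈ s, f x + ∑ x ∈ s, g x := by
  rw [← sum_add_distrib]
  exact sum_le_sum fun x _ => abs_sub_le_iff.2 ⟨by linarith [hg x], by linarith [hf x]⟩

lemma sum_mul_div_sum_eq {ι : Type*} {s : Finset ι} {f : ι → ℝ} (hf : ∀ x, 0 ≤ f x)
    {x : ι} (hx : x ∈ s) :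
    (∑ y ∈ s, f y) * (f x / ∑ y ∈ s, f y) = f x := by
  by_cases hS : ∑ y ∈ s, f y = 0
  · rw [hS, zero_mul, (sum_eq_zero_iff_of_nonneg fun y _ => hf y).1 hS x hx]
  · exact mul_div_cancel₀ _ hS

section condDist

variable {Ω : Type*} [Fintype Ω] [DecidableEq Ω]

lemma condDist_of_mem (P : Ω → ℝ) {E : Finset Ω} {x : Ω} (hx : x ∈ E) :
    condDist P E x = P x / ∑ y ∈ E, P y :=
  if_pos hx

lemma sum_condDist_le_one (P : Ω → ℝ) (E : Finset Ω) :
    ∑ x ∈ E, condDist P E x ≤ 1 := by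
  rw [sum_congr rfl fun x hx => condDist_of_mem P hx, ← sum_div]
  exact div_self_le_one _

lemma two_mul_tvDist_condDist (P Q : Ω → ℝ) (E : Finset Ω) :
    2 * tvDist (condDist P E) (condDist Q E) = ∑ x ∈ E, |condDist P E x - condDist Q E x| := by
  rw [tvDist, mul_div_cancel₀ _ two_ne_zero]
  refine (sum_subset (subset_univ E) fun x _ hx => ?_).symm
  simp [condDist, hx]

lemma sum_abs_sub_le_abs_sub_add_tvDist_condDist {P Q : Ω → ℝ}
    (hP : ∀ x, 0 ≤ P x) (hQ : ∀ x, 0 ≤ Q x) (E : Finset Ω) :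
    ∑ x ∈ E, |P x - Q x| ≤ |∑ x ∈ E, P x - ∑ x ∈ E, Q x| +
      2 * (∑ x ∈ E, Q x) * tvDist (condDist P E) (condDist Q E) := by
  set p := ∑ x ∈ E, P x
  set q := ∑ x ∈ E, Q x
  have hq : 0 ≤ q := sum_nonneg fun x _ => hQ x
  have hterm : ∀ x ∈ E, |P x - Q x| ≤
      |p - q| * condDist P E x + q * |condDist P E x - condDist Q E x| := fun x hx => by
    rw [condDist_of_mem P hx, condDist_of_mem Q hx]
    conv_lhs => rw [← sum_mul_div_sum_eq hP hx, ← sum_mul_div_sum_eq hQ hx]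
    exact abs_mul_sub_mul_le _ _ _ _ (div_nonneg (hP x) (sum_nonneg fun y _ => hP y)) hq
  calc ∑ x ∈ E, |P x - Q x|
      ≤ |p - q| * ∑ x ∈ E, condDist P E x + q * ∑ x ∈ E, |condDist P E x - condDist Q E x| := by
        rw [mul_sum, mul_sum, ← sum_add_distrib]
        exact sum_le_sum hterm
    _ ≤ |p - q| * 1 + q * ∑ x ∈ E, |condDist P E x - condDist Q E x| := by
        gcongr
        exact sum_condDist_le_one P E
    _ = |p - q| + 2 * q * tvDist (condDist P E) (condDist Q E) := by
        rw [mul_one, mul_assoc, mul_left_comm, two_mul_tvDist_condDist]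

end condDist

theorem stmt0_general {Ω : Type*} [Fintype Ω] [DecidableEq Ω] (P Q : Ω → ℝ) (A : Finset Ω)
    (hP0 : ∀ x, 0 ≤ P x) (hP1 : ∑ x, P x = 1)
    (hQ0 : ∀ x, 0 ≤ Q x) (hQ1 : ∑ x, Q x = 1) :
    tvDist P Q ≤ 2 * ((∑ x ∈ A, P x) + (∑ x ∈ A, Q x)) +
      (1 - ∑ x ∈ A, Q x) * tvDist (condDist P Aᶜ) (condDist Q Aᶜ) := by
  have hPA : 0 ≤ ∑ x ∈ A, P x := sum_nonneg fun x _ => hP0 x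
  have hQA : 0 ≤ ∑ x ∈ A, Q x := sum_nonneg fun x _ => hQ0 x
  have hPAc : ∑ x ∈ Aᶜ, P x = 1 - ∑ x ∈ A, P x := by
    rw [← hP1, ← sum_add_sum_compl A P, add_sub_cancel_left]
  have hQAc : ∑ x ∈ Aᶜ, Q x = 1 - ∑ x ∈ A, Q x := by
    rw [← hQ1, ← sum_add_sum_compl A Q, add_sub_cancel_left]
  have hsplit : 2 * tvDist P Q = ∑ x ∈ A, |P x - Q x| + ∑ x ∈ Aᶜ, |P x - Q x| := by
    rw [tvDist, mul_div_cancel₀ _ two_ne_zero, sum_add_sum_compl]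
  have hA := sum_abs_sub_le_sum_add_sum A P Q hP0 hQ0
  have hAc := sum_abs_sub_le_abs_sub_add_tvDist_condDist hP0 hQ0 Aᶜ
  have hmass : |∑ x ∈ Aᶜ, P x - ∑ x ∈ Aᶜ, Q x| ≤ (∑ x ∈ A, P x) + ∑ x ∈ A, Q x := by
    rw [hPAc, hQAc, abs_le]
    constructor <;> linarith
  rw [hQAc] at hAc hmass
  linarith

/-- For probability distributions `P`, `Q` on a finite space with `Q ≪ P` and any event `A`,
`d_TV(P,Q) ≤ 2(P(A)+Q(A)) + (1 − Q(A)) · d_TV(P|_{Aᶜ}, Q|_{Aᶜ})`. -/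
theorem stmt0 {Ω : Type*} [Fintype Ω] [DecidableEq Ω] (P Q : Ω → ℝ) (A : Finset Ω)
    (hP0 : ∀ x, 0 ≤ P x) (hP1 : ∑ x, P x = 1)
    (hQ0 : ∀ x, 0 ≤ Q x) (hQ1 : ∑ x, Q x = 1)
    (hac : ∀ x, P x = 0 → Q x = 0) :
    tvDist P Q ≤ 2 * ((∑ x ∈ A, P x) + (∑ x ∈ A, Q x)) +
      (1 - ∑ x ∈ A, Q x) * tvDist (condDist P Aᶜ) (condDist Q Aᶜ) :=
  stmt0_general P Q A hP0 hP1 hQ0 hQ1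
end

section
/- Let P be a probability distribution on a finite space with p.m.f. P(x) = f(x)/Z for a positive function f and normalizer Z = Σ_x f(x). Let U be a discrete random variable and for each value u let Q_u(x) = f_u(x)/Z_u be a Gibbs distribution with normalizer Z_u = Σ_x f_u(x), and let Q(x) = E_U[f_U(x)/Z_U] be the mixture. Define ρ_u(x) = f_u(x)/f(x). Then χ²(Q‖P) + 1 = E_{U,U'}[ E_{X∼P}[ρ_U(X) ρ_{U'}(X)] / ( E_{X∼P}[ρ_U(X)] · E_{X∼P}[ρ_{U'}(X)] ) ], where U' is an i.i.d. copy of U. -/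
open Finset

/-!
Write `Z = ∑ f` and `Z_u = ∑ f_u`. Since `f x ≠ 0`, every `P`-expectation of a ratio
`g / f` is `(∑ g) / Z`; in particular `E_P[ρ_u] = Z_u / Z`. Both sides then expand,
by expanding the square `(∑_u (π_u / Z_u) f_u x)²`, to the same double sum
`∑_{u,u'} (π_u / Z_u) (π_{u'} / Z_{u'}) ∑_x f_u x f_{u'} x Z / f x`.
-/

lemma mul_div_sq_self {K : Type*} [Field K] (a q : K) : a * (q / a) ^ 2 = q ^ 2 / a := by
  rcases eq_or_ne a 0 with rfl | ha
  · simp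
  · field_simp

lemma sum_div_mul_div_of_ne_zero {Ω K : Type*} [Fintype Ω] [Field K] {f : Ω → K}
    (hf : ∀ x, f x ≠ 0) (g : Ω → K) (Z : K) :
    ∑ x, f x / Z * (g x / f x) = (∑ x, g x) / Z := by
  rw [sum_div]
  refine sum_congr rfl fun x _ => ?_
  field_simp [hf x]

lemma sum_sq_sum_mul_eq_sum_sum {Ω U R : Type*} [Fintype Ω] [Fintype U] [CommSemiring R]
    (c : U → R) (g : U → Ω → R) (w : Ω → R) :
    ∑ x, (∑ u, c u * g u x) ^ 2 * w x =
      ∑ u, ∑ u', c u * c u' * ∑ x, g u x * g u' x * w x := by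
  simp_rw [sq, sum_mul_sum, sum_mul, mul_sum]
  rw [sum_comm]
  refine sum_congr rfl fun u _ => ?_
  rw [sum_comm]
  refine sum_congr rfl fun u' _ => sum_congr rfl fun x _ => ?_
  ring

theorem stmt5_general {Ω U : Type*} [Fintype Ω] [Fintype U]
    (f : Ω → ℝ) (fU : U → Ω → ℝ) (π : U → ℝ)
    (hf : ∀ x, 0 < f x) :
    (∑ x, (f x / ∑ y, f y) *
        ((∑ u, π u * (fU u x / ∑ y, fU u y)) / (f x / ∑ y, f y)) ^ 2) =
      ∑ u, ∑ u', π u * π u' *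
        ((∑ x, (f x / ∑ y, f y) * ((fU u x / f x) * (fU u' x / f x))) /
          ((∑ x, (f x / ∑ y, f y) * (fU u x / f x)) *
            (∑ x, (f x / ∑ y, f y) * (fU u' x / f x)))) := by
  rcases isEmpty_or_nonempty Ω with hΩ | hΩ
  · simp
  have hf0 : ∀ x, f x ≠ 0 := fun x => (hf x).ne'
  have hZ : ∑ y, f y ≠ 0 := (sum_pos (fun y _ => hf y) univ_nonempty).ne'
  set Z := ∑ y, f y
  have hLHS : ∀ x, f x / Z * ((∑ u, π u * (fU u x / ∑ y, fU u y)) / (f x / Z)) ^ 2 =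
      (∑ u, π u / (∑ y, fU u y) * fU u x) ^ 2 * (Z / f x) := by
    intro x
    rw [mul_div_sq_self, div_div_eq_mul_div, mul_div_assoc]
    congr 2
    exact sum_congr rfl fun u _ => by ring
  simp_rw [hLHS, sum_sq_sum_mul_eq_sum_sum, div_mul_div_comm _ (f _), ← div_div,
    sum_div_mul_div_of_ne_zero hf0]
  refine sum_congr rfl fun u _ => sum_congr rfl fun u' _ => ?_
  have hZw : ∑ x, fU u x * fU u' x * (Z / f x) = Z * ∑ x, fU u x * fU u' x / f x := by
    rw [mul_sum]
    exact sum_congr rfl fun x _ => by ring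
  rw [hZw]
  field_simp

/-- χ²-divergence identity for a mixture of Gibbs measures: with `P(x) = f(x)/Z`,
`Q(x) = E_U[f_U(x)/Z_U]` and `ρ_u(x) = f_u(x)/f(x)`,
`χ²(Q‖P) + 1 = E_{U,U'}[ E_P[ρ_U ρ_{U'}] / (E_P[ρ_U] E_P[ρ_{U'}]) ]`.
Here `χ²(Q‖P) + 1 = E_{X∼P}[(dQ/dP(X))²]`. -/
theorem stmt5 {Ω U : Type*} [Fintype Ω] [Fintype U]
    (f : Ω → ℝ) (fU : U → Ω → ℝ) (π : U → ℝ)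
    (hf : ∀ x, 0 < f x) (hfU : ∀ u x, 0 < fU u x)
    (hπ0 : ∀ u, 0 ≤ π u) (hπ1 : ∑ u, π u = 1) :
    (∑ x, (f x / ∑ y, f y) *
        ((∑ u, π u * (fU u x / ∑ y, fU u y)) / (f x / ∑ y, f y)) ^ 2) =
      ∑ u, ∑ u', π u * π u' *
        ((∑ x, (f x / ∑ y, f y) * ((fU u x / f x) * (fU u' x / f x))) /
          ((∑ x, (f x / ∑ y, f y) * (fU u x / f x)) *
            (∑ x, (f x / ∑ y, f y) * (fU u' x / f x)))) :=
  stmt5_general f fU π hf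
end

section
/- Let G be a graph on n vertices such that every pair of vertices has at least c(n−2) common neighbors, for a constant 0 < c < 1. Let u, v be vertices with (u,v) ∉ G. Then for all sufficiently large n there exists, for each vertex w ∉ {u,v}, a subset B(u,w) of the common neighborhood of u and w such that: (1) |B(u,w)| = cn/3 for every w ∉ {u,v}; and (2) for every pair of distinct w₁, w₂ ∉ {u,v}, either w₁ ∉ B(u,w₂) or w₂ ∉ B(u,w₁). -/
/-!
Call `w₁ ≠ w₂` a mutual pair when `w₁ ∈ W(u, w₂)` and `w₂ ∈ W(u, w₁)`. Orient every mutual pair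
and let `B(u, w)` keep only those vertices of `W(u, w)` whose pair is not oriented towards `w`;
then no mutual pair survives in both directions. The mutual pairs admit an orientation in which
every in-degree exceeds the out-degree by at most one: in a multigraph with a vertex `x` of
degree at least two, replace two edges `xa`, `xc` by the single edge `ac`, orient the smaller
multigraph, and route `ac` through `x`. Hence `W(u, w)` loses at most half of its elements
rounded up, and `|W(u, w)| ≥ c(n - 2) ≥ 2⌊cn/3⌋ + 1` once `n ≥ 3/c + 6`.
-/

open Finset

/-- The wedge set of `u,w` in the graph `Gr` (given as a set of 2-element edge sets):
vertices adjacent to both `u` and `w`. -/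
def wedge {n : ℕ} (Gr : Finset (Finset (Fin n))) (u w : Fin n) : Finset (Fin n) :=
  Finset.univ.filter (fun k => k ≠ u ∧ k ≠ w ∧
    ({u, k} : Finset (Fin n)) ∈ Gr ∧ ({w, k} : Finset (Fin n)) ∈ Gr)

section Orientation

variable {V : Type*} [DecidableEq V]

def inDegree (D : Multiset (V × V)) (x : V) : ℕ := D.countP (·.2 = x)

def outDegree (D : Multiset (V × V)) (x : V) : ℕ := D.countP (·.1 = x)

@[simp]
lemma inDegree_cons (p : V × V) (D : Multiset (V × V)) (x : V) :
    inDegree (p ::ₘ D) x = inDegree D x + if p.2 = x then 1 else 0 :=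
  Multiset.countP_cons _ _ _

@[simp]
lemma outDegree_cons (p : V × V) (D : Multiset (V × V)) (x : V) :
    outDegree (p ::ₘ D) x = outDegree D x + if p.1 = x then 1 else 0 :=
  Multiset.countP_cons _ _ _

def IsBalancedOrientation (D : Multiset (V × V)) (M : Multiset (Sym2 V)) : Prop :=
  D.map (fun p => s(p.1, p.2)) = M ∧ ∀ x, inDegree D x ≤ outDegree D x + 1

lemma Multiset.exists_eq_cons_cons_of_two_le_countP {α : Type*} {p : α → Prop} [DecidablePred p]
    {M : Multiset α} (h : 2 ≤ M.countP p) : ∃ e f N, p e ∧ p f ∧ M = e ::ₘ f ::ₘ N := by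
  induction M using Multiset.induction with
  | empty => simp at h
  | cons a M ih =>
    rw [Multiset.countP_cons] at h
    by_cases ha : p a
    · obtain ⟨f, hfM, hf⟩ := Multiset.countP_pos.mp (by simp [ha] at h; omega : 0 < M.countP p)
      obtain ⟨N, rfl⟩ := Multiset.exists_cons_of_mem hfM
      exact ⟨a, f, N, ha, hf, rfl⟩
    · obtain ⟨e, f, N, he, hf, rfl⟩ := ih (by simpa [ha] using h)
      exact ⟨e, f, a ::ₘ N, he, hf, by simp only [Multiset.cons_swap a]⟩

lemma inDegree_map_out_le (M : Multiset (Sym2 V)) (x : V) :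
    inDegree (M.map Quot.out) x ≤ M.countP (x ∈ ·) := by
  induction M using Multiset.induction with
  | empty => simp [inDegree]
  | cons z M ih =>
    rw [Multiset.map_cons, inDegree_cons, Multiset.countP_cons]
    refine add_le_add ih ?_
    split_ifs with h₁ h₂ <;> first | omega | exact absurd (h₁ ▸ z.out_snd_mem) h₂

lemma exists_isBalancedOrientation_of_countP_mem_le_one {M : Multiset (Sym2 V)}
    (hM : ∀ x, M.countP (x ∈ ·) ≤ 1) : ∃ D, IsBalancedOrientation D M := by
  refine ⟨M.map Quot.out, ?_, fun x => ?_⟩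
  · rw [Multiset.map_map]
    exact (Multiset.map_congr rfl fun z _ => Quot.out_eq z).trans (Multiset.map_id M)
  · linarith [inDegree_map_out_le M x, hM x]

lemma IsBalancedOrientation.exists_cons_cons {M : Multiset (Sym2 V)} {x a c : V}
    {D : Multiset (V × V)} (hD : IsBalancedOrientation D (s(a, c) ::ₘ M)) :
    ∃ D', IsBalancedOrientation D' (s(x, a) ::ₘ s(x, c) ::ₘ M) := by
  obtain ⟨hmap, hbal⟩ := hD
  obtain ⟨p, hpD, hp⟩ := Multiset.mem_map.mp (hmap ▸ Multiset.mem_cons_self _ _)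
  obtain ⟨E, rfl⟩ := Multiset.exists_cons_of_mem hpD
  rw [Multiset.map_cons, hp, Multiset.cons_inj_right] at hmap
  refine ⟨(p.1, x) ::ₘ (x, p.2) ::ₘ E, ?_, fun y => ?_⟩
  · rcases Sym2.eq_iff.mp hp with ⟨h₁, h₂⟩ | ⟨h₁, h₂⟩ <;>
      simp only [Multiset.map_cons, hmap, h₁, h₂, Sym2.eq_swap (a := x), Multiset.cons_swap]
  · have := hbal y
    simp only [inDegree_cons, outDegree_cons] at this ⊢
    split_ifs at this ⊢ <;> omega

theorem exists_isBalancedOrientation (M : Multiset (Sym2 V)) :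
    ∃ D, IsBalancedOrientation D M := by
  induction hM : Multiset.card M using Nat.strong_induction_on generalizing M with
  | _ N ih =>
    by_cases h : ∃ x, 2 ≤ M.countP (x ∈ ·)
    · obtain ⟨x, hx⟩ := h
      obtain ⟨e, f, M', he, hf, rfl⟩ := Multiset.exists_eq_cons_cons_of_two_le_countP hx
      obtain ⟨a, rfl⟩ := Sym2.mem_iff_exists.mp he
      obtain ⟨c, rfl⟩ := Sym2.mem_iff_exists.mp hf
      obtain ⟨D, hD⟩ := ih _ (by simp [← hM]) (s(a, c) ::ₘ M') rfl
      exact hD.exists_cons_cons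
    · push Not at h
      exact exists_isBalancedOrientation_of_countP_mem_le_one fun x => Nat.le_of_lt_succ (h x)

lemma inDegree_add_outDegree {D : Multiset (V × V)} (hD : ∀ p ∈ D, p.1 ≠ p.2) (x : V) :
    inDegree D x + outDegree D x = (D.map (fun p => s(p.1, p.2))).countP (x ∈ ·) := by
  induction D using Multiset.induction with
  | empty => simp [inDegree, outDegree]
  | cons p D ih =>
    have hp := hD p (Multiset.mem_cons_self _ _)
    have := ih fun q hq => hD q (Multiset.mem_cons_of_mem hq)
    simp only [inDegree_cons, outDegree_cons, Multiset.map_cons, Multiset.countP_cons,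
      Sym2.mem_iff]
    split_ifs <;> grind

lemma card_filter_le_inDegree (D : Multiset (V × V)) (T : Finset V) (x : V) :
    #(T.filter fun b => (b, x) ∈ D) ≤ inDegree D x := by
  have hle : (T.filter fun b => (b, x) ∈ D).val.map (·, x) ≤ D.filter (·.2 = x) := by
    refine (Multiset.le_iff_subset ((Finset.nodup _).map fun a b h => ?_)).mpr fun p hp => ?_
    · simpa using h
    · obtain ⟨b, hb, rfl⟩ := Multiset.mem_map.mp hp
      exact Multiset.mem_filter.mpr ⟨(Finset.mem_filter.mp hb).2, rfl⟩
  simpa [inDegree, Multiset.countP_eq_card_filter, Finset.card_def] using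
    Multiset.card_le_card hle

end Orientation

lemma SimpleGraph.countP_mem_edgeFinset {V : Type*} [Fintype V] [DecidableEq V] (G : SimpleGraph V)
    [DecidableRel G.Adj] (v : V) : G.edgeFinset.val.countP (v ∈ ·) = G.degree v := by
  rw [Multiset.countP_eq_card_filter, ← Finset.filter_val, Finset.card_val,
    ← G.incidenceFinset_eq_filter, G.card_incidenceFinset_eq_degree]

section Mutual

variable {V : Type*}

def mutualGraph (S : V → Finset V) : SimpleGraph V where
  Adj a b := a ≠ b ∧ a ∈ S b ∧ b ∈ S a
  symm := ⟨fun _ _ h => ⟨h.1.symm, h.2.2, h.2.1⟩⟩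
  loopless := ⟨fun _ h => h.1 rfl⟩

@[simp]
lemma mutualGraph_adj {S : V → Finset V} {a b : V} :
    (mutualGraph S).Adj a b ↔ a ≠ b ∧ a ∈ S b ∧ b ∈ S a :=
  Iff.rfl

instance [DecidableEq V] (S : V → Finset V) : DecidableRel (mutualGraph S).Adj :=
  fun _ _ => decidable_of_iff' _ mutualGraph_adj

lemma degree_mutualGraph_le [Fintype V] [DecidableEq V] (S : V → Finset V) (w : V) :
    (mutualGraph S).degree w ≤ #(S w) :=
  Finset.card_le_card fun b hb =>
    (mutualGraph_adj.mp (((mutualGraph S).mem_neighborFinset w b).mp hb)).2.2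

theorem exists_asymmetric_subfamily [Fintype V] [DecidableEq V] (S : V → Finset V) :
    ∃ A : V → Finset V, (∀ w, A w ⊆ S w ∧ #(S w) ≤ 2 * #(A w) + 1) ∧
      ∀ a b, a ≠ b → a ∈ A b → b ∉ A a := by
  obtain ⟨D, hD, hbal⟩ := exists_isBalancedOrientation (mutualGraph S).edgeFinset.val
  have hDadj : ∀ p ∈ D, (mutualGraph S).Adj p.1 p.2 := fun p hp => by
    have : s(p.1, p.2) ∈ (mutualGraph S).edgeFinset := by
      rw [← Finset.mem_val, ← hD]; exact Multiset.mem_map_of_mem _ hp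
    simpa using this
  have hadjD : ∀ a b, (mutualGraph S).Adj a b → (a, b) ∈ D ∨ (b, a) ∈ D := fun a b hab => by
    have : s(a, b) ∈ (mutualGraph S).edgeFinset.val := (mutualGraph S).mem_edgeFinset.mpr hab
    obtain ⟨⟨a', b'⟩, hp, hpab⟩ := Multiset.mem_map.mp (hD ▸ this)
    rcases Sym2.eq_iff.mp hpab with ⟨rfl, rfl⟩ | ⟨rfl, rfl⟩
    exacts [Or.inl hp, Or.inr hp]
  refine ⟨fun w => (S w).filter fun b => (b, w) ∉ D, fun w => ⟨Finset.filter_subset _ _, ?_⟩,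
    fun a b hab ha hb => ?_⟩
  · dsimp only
    have hsplit := Finset.card_filter_add_card_filter_not (s := S w) (fun b => (b, w) ∈ D)
    have hin := card_filter_le_inDegree D (S w) w
    have hdeg : inDegree D w + outDegree D w = (mutualGraph S).degree w := by
      rw [inDegree_add_outDegree (fun p hp => (hDadj p hp).ne), hD,
        SimpleGraph.countP_mem_edgeFinset]
    have hdegS := degree_mutualGraph_le S w
    have hbalw := hbal w
    omega
  · rw [Finset.mem_filter] at ha hb
    rcases hadjD a b (mutualGraph_adj.mpr ⟨hab, ha.1, hb.1⟩) with h | h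
    exacts [ha.2 h, hb.2 h]

end Mutual

lemma two_mul_floor_add_one_le {c : ℝ} {n : ℕ} (hc : 0 < c) (hn : 3 / c + 6 ≤ n) :
    2 * (⌊c * n / 3⌋₊ : ℝ) + 1 ≤ c * (n - 2) := by
  have hfloor : (⌊c * n / 3⌋₊ : ℝ) ≤ c * n / 3 := Nat.floor_le (by positivity)
  have hcn : 3 + 6 * c ≤ c * n := by
    have := mul_le_mul_of_nonneg_left hn hc.le
    rwa [mul_add, mul_div_cancel₀ _ hc.ne', mul_comm c 6] at this
  linarith

theorem stmt12_general (c : ℝ) (hc0 : 0 < c) :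
    ∃ n₀ : ℕ, ∀ n : ℕ, n₀ ≤ n → ∀ Gr : Finset (Finset (Fin n)),
      (∀ i j : Fin n, i ≠ j → c * ((n : ℝ) - 2) ≤ ((wedge Gr i j).card : ℝ)) →
      ∀ u v : Fin n, u ≠ v → ({u, v} : Finset (Fin n)) ∉ Gr →
      ∃ B : Fin n → Finset (Fin n),
        (∀ w : Fin n, w ≠ u → w ≠ v →
          B w ⊆ wedge Gr u w ∧ (B w).card = ⌊c * (n : ℝ) / 3⌋₊) ∧
        (∀ w₁ w₂ : Fin n, w₁ ≠ u → w₁ ≠ v → w₂ ≠ u → w₂ ≠ v → w₁ ≠ w₂ →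
          w₁ ∉ B w₂ ∨ w₂ ∉ B w₁) := by
  refine ⟨⌈3 / c + 6⌉₊, fun n hn Gr hGr u v _ _ => ?_⟩
  set m := ⌊c * (n : ℝ) / 3⌋₊
  obtain ⟨A, hA, hAsymm⟩ := exists_asymmetric_subfamily (wedge Gr u)
  have hm : ∀ w, w ≠ u → m ≤ #(A w) := fun w hwu => by
    have hwedge : 2 * m + 1 ≤ #(wedge Gr u w) := by
      exact_mod_cast (two_mul_floor_add_one_le hc0 (Nat.ceil_le.mp hn)).trans (hGr u w hwu.symm)
    linarith [(hA w).2]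
  choose B hBA hBcard using fun w => Finset.exists_subset_card_eq (min_le_right m #(A w))
  refine ⟨B, fun w hwu _ => ⟨(hBA w).trans (hA w).1, ?_⟩, fun w₁ w₂ _ _ _ _ hne => ?_⟩
  · rw [hBcard, min_eq_left (hm w hwu)]
  · by_contra! h
    exact hAsymm w₁ w₂ hne (hBA w₂ h.1) (hBA w₁ h.2)

/-- In a `c`-uniformly 2-star dense graph with `(u,v) ∉ G`, for large `n` one can choose,
for each `w ∉ {u,v}`, a subset `B w` of the wedge set of `u,w` of size `cn/3`, such that
for every pair of distinct `w₁,w₂ ∉ {u,v}`, either `w₁ ∉ B w₂` or `w₂ ∉ B w₁`. -/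
theorem stmt12 (c : ℝ) (hc0 : 0 < c) (hc1 : c < 1) :
    ∃ n₀ : ℕ, ∀ n : ℕ, n₀ ≤ n → ∀ Gr : Finset (Finset (Fin n)),
      (∀ i j : Fin n, i ≠ j → c * ((n : ℝ) - 2) ≤ ((wedge Gr i j).card : ℝ)) →
      ∀ u v : Fin n, u ≠ v → ({u, v} : Finset (Fin n)) ∉ Gr →
      ∃ B : Fin n → Finset (Fin n),
        (∀ w : Fin n, w ≠ u → w ≠ v →
          B w ⊆ wedge Gr u w ∧ (B w).card = ⌊c * (n : ℝ) / 3⌋₊) ∧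
        (∀ w₁ w₂ : Fin n, w₁ ≠ u → w₁ ≠ v → w₂ ≠ u → w₂ ≠ v → w₁ ≠ w₂ →
          w₁ ∉ B w₂ ∨ w₂ ∉ B w₁) :=
  stmt12_general c hc0
end

section
/- Let P be a q-marginally small distribution on {0,1}^N whose graphical model has maximum degree Δ. Then the Glauber dynamics on P satisfies path coupling with contraction constant α = (1−6qΔ)/N with respect to the uniform Hamming distance: for any two configurations x, x' differing in exactly one coordinate, there is a one-step coupling with E[d_H(step(x), step(x'))] ≤ (1 − (1−6qΔ)/N) · d_H(x,x'). -/
/-!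
Couple the two Glauber chains by updating the same site `i` in both, with the maximal coupling of
the two conditional laws at `i`. Disagreements off `i` persist, one at `i` is repaired, and a new
one appears with probability `|P(x_i = 1 | x) - P(x_i = 1 | x')|`. By the Markov property this
vanishes unless `i` is a neighbour of the single disagreement, and by marginal smallness it is at
most `q`, so the expected distance after one step is at most `1 - 1/N + qΔ/N`.
-/

open Finset

/-- The Glauber dynamics transition kernel of `μ` on `{0,1}^N`. -/
noncomputable def glauber {N : ℕ} (μ : (Fin N → Bool) → ℝ) (σ τ : Fin N → Bool) : ℝ :=
  (1 / (N : ℝ)) * ∑ i : Fin N,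
    (if ∀ j : Fin N, j ≠ i → τ j = σ j then
      μ (Function.update σ i (τ i)) /
        (μ (Function.update σ i true) + μ (Function.update σ i false))
    else 0)

/-- Hamming distance between two configurations. -/
def hamming {N : ℕ} (x y : Fin N → Bool) : ℕ :=
  (Finset.univ.filter (fun i => x i ≠ y i)).card

structure IsCoupling {α β : Type*} [Fintype α] [Fintype β]
    (ν : α × β → ℝ) (f : α → ℝ) (g : β → ℝ) : Prop where
  nonneg : ∀ z, 0 ≤ ν z
  sum_snd : ∀ a, ∑ b, ν (a, b) = f a
  sum_fst : ∀ b, ∑ a, ν (a, b) = g b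

def pushforward {α β : Type*} [Fintype α] [DecidableEq β] (φ : α → β) (f : α → ℝ) (b : β) : ℝ :=
  ∑ a, if φ a = b then f a else 0

section Coupling

variable {α β γ δ : Type*} [Fintype α] [Fintype β] [Fintype γ] [Fintype δ]

theorem sum_pushforward_mul [DecidableEq β] (φ : α → β) (f : α → ℝ) (c : β → ℝ) :
    ∑ b, pushforward φ f b * c b = ∑ a, f a * c (φ a) := by
  simp only [pushforward, sum_mul, ite_mul, zero_mul]
  rw [sum_comm]
  simp

namespace IsCoupling

variable {ν : α × β → ℝ} {f : α → ℝ} {g : β → ℝ}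

theorem sum_eq (h : IsCoupling ν f g) : ∑ z, ν z = ∑ a, f a := by
  rw [Fintype.sum_prod_type]
  exact sum_congr rfl fun a _ => h.sum_snd a

theorem map [DecidableEq γ] [DecidableEq δ] (h : IsCoupling ν f g) (φ : α → γ) (ψ : β → δ) :
    IsCoupling (pushforward (Prod.map φ ψ) ν) (pushforward φ f) (pushforward ψ g) where
  nonneg z := sum_nonneg fun a _ => by split <;> simp [h.nonneg a]
  sum_snd c := by
    simp only [pushforward, Fintype.sum_prod_type, Prod.map, Prod.mk.injEq, ite_and]
    rw [sum_comm]
    refine sum_congr rfl fun a _ => ?_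
    rw [sum_comm]
    by_cases hc : φ a = c <;> simp [hc, ← h.sum_snd a]
  sum_fst d := by
    simp only [pushforward, Fintype.sum_prod_type, Prod.map, Prod.mk.injEq, ite_and]
    rw [sum_comm]
    conv_lhs => enter [2, a]; rw [sum_comm]
    simp only [sum_ite_eq, mem_univ, if_true]
    rw [sum_comm]
    refine sum_congr rfl fun b _ => ?_
    by_cases hd : ψ b = d <;> simp [hd, ← h.sum_fst b]

theorem mix {ι : Type*} [Fintype ι] {w : ι → ℝ} (hw : ∀ i, 0 ≤ w i) {ν : ι → α × β → ℝ}
    {f : ι → α → ℝ} {g : ι → β → ℝ} (h : ∀ i, IsCoupling (ν i) (f i) (g i)) :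
    IsCoupling (fun z => ∑ i, w i * ν i z) (fun a => ∑ i, w i * f i a)
      (fun b => ∑ i, w i * g i b) where
  nonneg z := sum_nonneg fun i _ => mul_nonneg (hw i) ((h i).nonneg z)
  sum_snd a := by
    rw [sum_comm]
    simp only [← mul_sum, (h _).sum_snd]
  sum_fst b := by
    rw [sum_comm]
    simp only [← mul_sum, (h _).sum_fst]

end IsCoupling

end Coupling

noncomputable def boolMaxCoupling (f g : Bool → ℝ) (z : Bool × Bool) : ℝ :=
  if z.1 = z.2 then min (f z.1) (g z.1) else max (f z.1 - g z.1) 0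

section BoolMaxCoupling

variable {f g : Bool → ℝ}

theorem isCoupling_boolMaxCoupling (hf : ∀ b, 0 ≤ f b) (hg : ∀ b, 0 ≤ g b)
    (hfg : f true + f false = g true + g false) :
    IsCoupling (boolMaxCoupling f g) f g where
  nonneg z := by
    unfold boolMaxCoupling
    split
    · exact le_min (hf _) (hg _)
    · exact le_max_right _ _
  sum_snd a := by
    cases a <;> simp only [Fintype.sum_bool, boolMaxCoupling, Bool.true_eq_false,
      Bool.false_eq_true, ↓reduceIte, min_def, max_def] <;> split_ifs <;> linarith
  sum_fst b := by
    cases b <;> simp only [Fintype.sum_bool, boolMaxCoupling, Bool.true_eq_false,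
      Bool.false_eq_true, ↓reduceIte, min_def, max_def] <;> split_ifs <;> linarith

theorem sum_boolMaxCoupling_mul_ne (hfg : f true + f false = g true + g false) :
    ∑ z, boolMaxCoupling f g z * (if z.1 ≠ z.2 then 1 else 0) = |f true - g true| := by
  simp only [Fintype.sum_prod_type, Fintype.sum_bool, boolMaxCoupling, ne_eq, not_true_eq_false,
    Bool.true_eq_false, Bool.false_eq_true, not_false_eq_true, ↓reduceIte, mul_zero, mul_one,
    zero_add, add_zero, max_def, abs_eq_max_neg]
  split_ifs <;> linarith

end BoolMaxCoupling

section Hamming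

variable {N : ℕ}

theorem hamming_eq_sum (x y : Fin N → Bool) :
    hamming x y = ∑ j, if x j ≠ y j then 1 else 0 := by
  rw [hamming, card_filter]

theorem hamming_update_update_add (x y : Fin N → Bool) (i : Fin N) (b c : Bool) :
    hamming (Function.update x i b) (Function.update y i c) + (if x i ≠ y i then 1 else 0) =
      hamming x y + if b ≠ c then 1 else 0 := by
  rw [hamming_eq_sum, hamming_eq_sum, ← add_sum_erase _ _ (mem_univ i),
    ← add_sum_erase _ _ (mem_univ i)]
  have hoff : ∀ j ∈ univ.erase i,
      (if Function.update x i b j ≠ Function.update y i c j then 1 else 0) =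
        if x j ≠ y j then 1 else 0 := fun j hj => by
    rw [Function.update_of_ne (ne_of_mem_erase hj), Function.update_of_ne (ne_of_mem_erase hj)]
  rw [sum_congr rfl hoff]
  simp only [Function.update_self]
  ring

theorem hamming_eq_one_of_ne_of_forall_ne_eq {x y : Fin N → Bool} {i : Fin N} (hi : x i ≠ y i)
    (hj : ∀ j, j ≠ i → x j = y j) : hamming x y = 1 := by
  rw [hamming, card_eq_one]
  exact ⟨i, by ext j; by_cases h : j = i <;> simp_all⟩

end Hamming

noncomputable def condProb {N : ℕ} (μ : (Fin N → Bool) → ℝ) (i : Fin N) (σ : Fin N → Bool)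
    (b : Bool) : ℝ :=
  μ (Function.update σ i b) / (μ (Function.update σ i true) + μ (Function.update σ i false))

section Glauber

variable {N : ℕ} {μ : (Fin N → Bool) → ℝ}

theorem condProb_nonneg (hμ : ∀ σ, 0 < μ σ) (i : Fin N) (σ : Fin N → Bool) (b : Bool) :
    0 ≤ condProb μ i σ b :=
  div_nonneg (hμ _).le (add_pos (hμ _) (hμ _)).le

theorem condProb_true_add_false (hμ : ∀ σ, 0 < μ σ) (i : Fin N) (σ : Fin N → Bool) :
    condProb μ i σ true + condProb μ i σ false = 1 := by
  rw [condProb, condProb, ← add_div, div_self (add_pos (hμ _) (hμ _)).ne']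

theorem condProb_mass_eq (hμ : ∀ σ, 0 < μ σ) (i : Fin N) (σ τ : Fin N → Bool) :
    condProb μ i σ true + condProb μ i σ false = condProb μ i τ true + condProb μ i τ false := by
  rw [condProb_true_add_false hμ, condProb_true_add_false hμ]

theorem condProb_true_le {q : ℝ} (hμ : ∀ σ, 0 < μ σ) {i : Fin N} {σ : Fin N → Bool}
    (h : μ (Function.update σ i true) ≤
      q * (μ (Function.update σ i true) + μ (Function.update σ i false))) :
    condProb μ i σ true ≤ q :=
  (div_le_iff₀ (add_pos (hμ _) (hμ _))).2 h

theorem condProb_true_eq (hμ : ∀ σ, 0 < μ σ) {i : Fin N} {σ τ : Fin N → Bool}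
    (h : μ (Function.update σ i true) *
        (μ (Function.update τ i true) + μ (Function.update τ i false)) =
      μ (Function.update τ i true) *
        (μ (Function.update σ i true) + μ (Function.update σ i false))) :
    condProb μ i σ true = condProb μ i τ true :=
  (div_eq_div_iff (add_pos (hμ _) (hμ _)).ne' (add_pos (hμ _) (hμ _)).ne').2 h

theorem glauber_eq_sum_pushforward (μ : (Fin N → Bool) → ℝ) (σ τ : Fin N → Bool) :
    glauber μ σ τ = ∑ i, 1 / (N : ℝ) * pushforward (Function.update σ i) (condProb μ i σ) τ := by
  rw [glauber, mul_sum]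
  refine sum_congr rfl fun i _ => ?_
  simp only [pushforward, Function.update_eq_iff, ite_and, sum_ite_eq', mem_univ, if_true]
  congr 2
  exact propext (forall₂_congr fun _ _ => eq_comm)

noncomputable def siteCoupling (μ : (Fin N → Bool) → ℝ) (i : Fin N) (x x' : Fin N → Bool) :
    (Fin N → Bool) × (Fin N → Bool) → ℝ :=
  pushforward (Prod.map (Function.update x i) (Function.update x' i))
    (boolMaxCoupling (condProb μ i x) (condProb μ i x'))

noncomputable def glauberCoupling (μ : (Fin N → Bool) → ℝ) (x x' : Fin N → Bool)
    (z : (Fin N → Bool) × (Fin N → Bool)) : ℝ :=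
  ∑ i, 1 / (N : ℝ) * siteCoupling μ i x x' z

theorem isCoupling_glauberCoupling (hμ : ∀ σ, 0 < μ σ) (x x' : Fin N → Bool) :
    IsCoupling (glauberCoupling μ x x') (glauber μ x) (glauber μ x') := by
  have hsite i : IsCoupling (siteCoupling μ i x x')
      (pushforward (Function.update x i) (condProb μ i x))
      (pushforward (Function.update x' i) (condProb μ i x')) :=
    (isCoupling_boolMaxCoupling (condProb_nonneg hμ i x) (condProb_nonneg hμ i x')
      (condProb_mass_eq hμ i x x')).map _ _
  have := IsCoupling.mix (w := fun _ => 1 / (N : ℝ)) (fun _ => by positivity) hsite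
  simp only [← glauber_eq_sum_pushforward] at this
  exact this

theorem sum_siteCoupling_mul_hamming (hμ : ∀ σ, 0 < μ σ) (i : Fin N) (x x' : Fin N → Bool) :
    ∑ z, siteCoupling μ i x x' z * hamming z.1 z.2 =
      hamming x x' - (if x i ≠ x' i then 1 else 0) +
        |condProb μ i x true - condProb μ i x' true| := by
  have hπ : IsCoupling (boolMaxCoupling (condProb μ i x) (condProb μ i x'))
      (condProb μ i x) (condProb μ i x') :=
    isCoupling_boolMaxCoupling (condProb_nonneg hμ i x) (condProb_nonneg hμ i x')
      (condProb_mass_eq hμ i x x')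
  have hdist b c : (hamming (Function.update x i b) (Function.update x' i c) : ℝ) =
      hamming x x' - (if x i ≠ x' i then 1 else 0) + if b ≠ c then 1 else 0 := by
    have := congrArg (Nat.cast (R := ℝ)) (hamming_update_update_add x x' i b c)
    push_cast at this
    linarith
  have hpush := sum_pushforward_mul (Prod.map (Function.update x i) (Function.update x' i))
    (boolMaxCoupling (condProb μ i x) (condProb μ i x')) fun z => (hamming z.1 z.2 : ℝ)
  rw [siteCoupling, hpush]
  simp only [Prod.map, hdist, mul_add, sum_add_distrib, ← sum_mul, hπ.sum_eq, Fintype.sum_bool,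
    condProb_true_add_false hμ, one_mul]
  rw [sum_boolMaxCoupling_mul_ne (condProb_mass_eq hμ i x x')]

theorem sum_glauberCoupling_mul_hamming (hμ : ∀ σ, 0 < μ σ) (x x' : Fin N → Bool) :
    ∑ z, glauberCoupling μ x x' z * hamming z.1 z.2 =
      (1 - 1 / (N : ℝ)) * hamming x x' +
        1 / (N : ℝ) * ∑ i, |condProb μ i x true - condProb μ i x' true| := by
  obtain rfl | hN := N.eq_zero_or_pos
  · simp [glauberCoupling, hamming]
  have hdisagree : (hamming x x' : ℝ) = ∑ i, if x i ≠ x' i then 1 else 0 := by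
    rw [hamming_eq_sum]; push_cast; rfl
  simp only [glauberCoupling, sum_mul, mul_assoc]
  rw [sum_comm]
  simp only [← mul_sum, sum_siteCoupling_mul_hamming hμ, sum_add_distrib, sum_sub_distrib,
    ← hdisagree, sum_const, card_univ, Fintype.card_fin, nsmul_eq_mul]
  field_simp

theorem abs_condProb_sub_le {q : ℝ} (hμ : ∀ σ, 0 < μ σ) {i : Fin N} {σ τ : Fin N → Bool}
    (hσ : μ (Function.update σ i true) ≤
      q * (μ (Function.update σ i true) + μ (Function.update σ i false)))
    (hτ : μ (Function.update τ i true) ≤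
      q * (μ (Function.update τ i true) + μ (Function.update τ i false))) :
    |condProb μ i σ true - condProb μ i τ true| ≤ q :=
  abs_sub_le_of_nonneg_of_le (condProb_nonneg hμ i σ true) (condProb_true_le hμ hσ)
    (condProb_nonneg hμ i τ true) (condProb_true_le hμ hτ)

theorem sum_abs_condProb_sub_le (hμ : ∀ σ, 0 < μ σ) {Adj : Fin N → Fin N → Bool}
    (hsym : ∀ i j, Adj i j = Adj j i) {i₀ : Fin N} {Δ : ℕ}
    (hdeg : (univ.filter fun j => Adj i₀ j = true).card ≤ Δ) {q : ℝ} (hq : 0 ≤ q)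
    (hsmall : ∀ (i : Fin N) (σ : Fin N → Bool),
      μ (Function.update σ i true) ≤
        q * (μ (Function.update σ i true) + μ (Function.update σ i false)))
    (hMarkov : ∀ (i : Fin N) (σ τ : Fin N → Bool),
      (∀ j, Adj i j = true → σ j = τ j) →
      μ (Function.update σ i true) *
          (μ (Function.update τ i true) + μ (Function.update τ i false)) =
        μ (Function.update τ i true) *
          (μ (Function.update σ i true) + μ (Function.update σ i false)))
    {x x' : Fin N → Bool} (hagree : ∀ j, j ≠ i₀ → x j = x' j) :
    ∑ i, |condProb μ i x true - condProb μ i x' true| ≤ Δ * q := by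
  have hsite i : |condProb μ i x true - condProb μ i x' true| ≤ if Adj i₀ i then q else 0 := by
    split_ifs with hadj
    · exact abs_condProb_sub_le hμ (hsmall i x) (hsmall i x')
    · rw [condProb_true_eq hμ (hMarkov i x x' ?_), sub_self, abs_zero]
      intro j hj
      exact hagree j fun hj₀ => hadj (by rwa [hj₀, hsym] at hj)
  calc _ ≤ ∑ i, if Adj i₀ i then q else 0 := sum_le_sum fun i _ => hsite i
    _ = (univ.filter fun i => Adj i₀ i = true).card * q := by
      rw [← sum_filter, sum_const, nsmul_eq_mul]
    _ ≤ Δ * q := mul_le_mul_of_nonneg_right (by exact_mod_cast hdeg) hq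

end Glauber

theorem stmt16_general {N : ℕ} (μ : (Fin N → Bool) → ℝ)
    (hμ0 : ∀ σ, 0 < μ σ)
    (Adj : Fin N → Fin N → Bool)
    (hsym : ∀ i j, Adj i j = Adj j i)
    (Δ : ℕ) (hdeg : ∀ i, (Finset.univ.filter (fun j => Adj i j = true)).card ≤ Δ)
    (q : ℝ) (hq0 : 0 ≤ q)
    (hsmall : ∀ (i : Fin N) (σ : Fin N → Bool),
      μ (Function.update σ i true) ≤
        q * (μ (Function.update σ i true) + μ (Function.update σ i false)))
    (hMarkov : ∀ (i : Fin N) (σ τ : Fin N → Bool),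
      (∀ j, Adj i j = true → σ j = τ j) →
      μ (Function.update σ i true) *
          (μ (Function.update τ i true) + μ (Function.update τ i false)) =
        μ (Function.update τ i true) *
          (μ (Function.update σ i true) + μ (Function.update σ i false)))
    (x x' : Fin N → Bool) (hdiff : ∃ i, x i ≠ x' i ∧ ∀ j, j ≠ i → x j = x' j) :
    ∃ ν : ((Fin N → Bool) × (Fin N → Bool)) → ℝ,
      (∀ z, 0 ≤ ν z) ∧
      (∀ y, ∑ y', ν (y, y') = glauber μ x y) ∧
      (∀ y', ∑ y, ν (y, y') = glauber μ x' y') ∧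
      (∑ z : (Fin N → Bool) × (Fin N → Bool), ν z * (hamming z.1 z.2 : ℝ)) ≤
        (1 - (1 - 6 * q * (Δ : ℝ)) / (N : ℝ)) * (hamming x x' : ℝ) := by
  obtain ⟨i₀, hi₀, hagree⟩ := hdiff
  obtain ⟨hν, hνx, hνx'⟩ := isCoupling_glauberCoupling hμ0 x x'
  refine ⟨glauberCoupling μ x x', hν, hνx, hνx', ?_⟩
  have hsum : ∑ i, |condProb μ i x true - condProb μ i x' true| ≤ 6 * q * Δ :=
    (sum_abs_condProb_sub_le hμ0 hsym (hdeg i₀) hq0 hsmall hMarkov hagree).trans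
      (by nlinarith [mul_nonneg hq0 (Nat.cast_nonneg (α := ℝ) Δ)])
  rw [sum_glauberCoupling_mul_hamming hμ0, hamming_eq_one_of_ne_of_forall_ne_eq hi₀ hagree]
  calc _ = 1 - 1 / (N : ℝ) * (1 - ∑ i, |condProb μ i x true - condProb μ i x' true|) := by
        push_cast; ring
    _ ≤ 1 - 1 / (N : ℝ) * (1 - 6 * q * Δ) := by gcongr
    _ = _ := by push_cast; ring

/-- Path coupling for marginally small distributions: if `μ` is `q`-marginally small with
graphical model of maximum degree `Δ`, then for configurations differing in exactly one
coordinate there is a one-step coupling of the Glauber dynamics contracting the Hamming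
distance by a factor `1 − (1−6qΔ)/N`. -/
theorem stmt16 {N : ℕ} (hN : 0 < N) (μ : (Fin N → Bool) → ℝ)
    (hμ0 : ∀ σ, 0 < μ σ) (hμ1 : ∑ σ, μ σ = 1)
    (Adj : Fin N → Fin N → Bool)
    (hsym : ∀ i j, Adj i j = Adj j i) (hirr : ∀ i, Adj i i = false)
    (Δ : ℕ) (hdeg : ∀ i, (Finset.univ.filter (fun j => Adj i j = true)).card ≤ Δ)
    (q : ℝ) (hq0 : 0 ≤ q)
    (hsmall : ∀ (i : Fin N) (σ : Fin N → Bool),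
      μ (Function.update σ i true) ≤
        q * (μ (Function.update σ i true) + μ (Function.update σ i false)))
    (hMarkov : ∀ (i : Fin N) (σ τ : Fin N → Bool),
      (∀ j, Adj i j = true → σ j = τ j) →
      μ (Function.update σ i true) *
          (μ (Function.update τ i true) + μ (Function.update τ i false)) =
        μ (Function.update τ i true) *
          (μ (Function.update σ i true) + μ (Function.update σ i false)))
    (x x' : Fin N → Bool) (hdiff : ∃ i, x i ≠ x' i ∧ ∀ j, j ≠ i → x j = x' j) :
    ∃ ν : ((Fin N → Bool) × (Fin N → Bool)) → ℝ,
      (∀ z, 0 ≤ ν z) ∧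
      (∀ y, ∑ y', ν (y, y') = glauber μ x y) ∧
      (∀ y', ∑ y, ν (y, y') = glauber μ x' y') ∧
      (∑ z : (Fin N → Bool) × (Fin N → Bool), ν z * (hamming z.1 z.2 : ℝ)) ≤
        (1 - (1 - 6 * q * (Δ : ℝ)) / (N : ℝ)) * (hamming x x' : ℝ) :=
  stmt16_general μ hμ0 Adj hsym Δ hdeg q hq0 hsmall hMarkov x x' hdiff
end
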